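/- arXiv:1904.02661 — 4 statements merged into one kernel-verified Lean document; each statement's English description precedes it below -/
import Mathlib

section
/- Let G be a cubic graph. Then G admits a P10-coloring (i.e., P10 ≺ G, where P10 is the Petersen graph) if and only if G admits a normal edge-coloring with at most 5 colors. -/
open SimpleGraph

/-- A graph is cubic if every vertex has degree 3. -/
def IsCubic {V : Type*} (G : SimpleGraph V) : Prop :=
  ∀ v : V, (G.neighborSet v).ncard = 3

/-- A proper edge-coloring: distinct edges of `G` sharing a vertex get different colors. -/
def IsProperEdgeColoring {V α : Type*} (G : SimpleGraph V) (c : Sym2 V → α) : Prop :=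
  ∀ e₁ ∈ G.edgeSet, ∀ e₂ ∈ G.edgeSet, e₁ ≠ e₂ → (∃ v, v ∈ e₁ ∧ v ∈ e₂) → c e₁ ≠ c e₂

/-- `S_c(v)`: the set of colors assigned by `c` to the edges of `G` incident to `v`. -/
def colorSet {V α : Type*} (G : SimpleGraph V) (c : Sym2 V → α) (v : V) : Set α :=
  c '' (G.incidenceSet v)

/-- An edge `uv` is poor if `|S_c(u) ∪ S_c(v)| = 3`. -/
def IsPoorEdge {V α : Type*} (G : SimpleGraph V) (c : Sym2 V → α) (u v : V) : Prop :=
  (colorSet G c u ∪ colorSet G c v).ncard = 3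

/-- An edge `uv` is rich if `|S_c(u) ∪ S_c(v)| = 5`. -/
def IsRichEdge {V α : Type*} (G : SimpleGraph V) (c : Sym2 V → α) (u v : V) : Prop :=
  (colorSet G c u ∪ colorSet G c v).ncard = 5

/-- A normal edge-coloring: a proper edge-coloring in which every edge is poor or rich. -/
def IsNormalEdgeColoring {V α : Type*} (G : SimpleGraph V) (c : Sym2 V → α) : Prop :=
  IsProperEdgeColoring G c ∧
    ∀ u v : V, G.Adj u v → IsPoorEdge G c u v ∨ IsRichEdge G c u v

/-- An `H`-coloring of `G`: a map on edges such that for every vertex `v` of `G` there is a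
vertex `w` of `H` with `φ(∂_G(v)) = ∂_H(w)`. -/
def IsHColoring {V W : Type*} (G : SimpleGraph V) (H : SimpleGraph W)
    (φ : Sym2 V → Sym2 W) : Prop :=
  ∀ v : V, ∃ w : W, φ '' (G.incidenceSet v) = H.incidenceSet w

/-- A perfect matching, as a set of edges: pairwise nonadjacent edges covering every vertex,
i.e., every vertex lies in exactly one edge of `M`. -/
def IsPerfectMatchingSet {V : Type*} (G : SimpleGraph V) (M : Set (Sym2 V)) : Prop :=
  M ⊆ G.edgeSet ∧ ∀ v : V, ∃! e, e ∈ M ∧ v ∈ e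

/-- A Berge–Fulkerson covering: six perfect matchings such that every edge of `G`
belongs to exactly two of them. -/
def IsBergeFulkersonCovering {V : Type*} (G : SimpleGraph V)
    (M : Fin 6 → Set (Sym2 V)) : Prop :=
  (∀ i, IsPerfectMatchingSet G (M i)) ∧
    ∀ e ∈ G.edgeSet, {i : Fin 6 | e ∈ M i}.ncard = 2

/-- Vertices of the Petersen graph: 2-element subsets of a 5-element set. -/
def PetersenVertex : Type := {s : Finset (Fin 5) // s.card = 2}

/-- The Petersen graph, as the Kneser graph `K(5,2)`. -/
def Petersen : SimpleGraph PetersenVertex where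
  Adj s t := Disjoint s.1 t.1
  symm := ⟨fun _ _ h => h.symm⟩
  loopless := ⟨fun s h => by
    have h2 := s.2
    have h' : Disjoint s.1 s.1 := h
    rw [disjoint_self] at h'
    rw [h'] at h2
    simp at h2⟩

instance : DecidableEq PetersenVertex :=
  inferInstanceAs (DecidableEq {s : Finset (Fin 5) // s.card = 2})

instance : Fintype PetersenVertex :=
  inferInstanceAs (Fintype {s : Finset (Fin 5) // s.card = 2})

instance : Inhabited PetersenVertex := ⟨⟨{0, 1}, by decide⟩⟩

def mkPV (s : Finset (Fin 5)) : PetersenVertex :=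
  if h : s.card = 2 then ⟨s, h⟩ else default

lemma mkPV_val {s : Finset (Fin 5)} (h : s.card = 2) : (mkPV s).1 = s := by
  simp [mkPV, h]

def fifth (a b : PetersenVertex) : Fin 5 :=
  if h : ((a.1 ∪ b.1)ᶜ : Finset (Fin 5)).Nonempty then (a.1 ∪ b.1)ᶜ.min' h else 0

lemma fifth_comm (a b : PetersenVertex) : fifth a b = fifth b a := by
  simp [fifth, Finset.union_comm]

def pi5 : Sym2 PetersenVertex → Fin 5 := Sym2.lift ⟨fifth, fifth_comm⟩

@[simp] lemma pi5_mk (a b : PetersenVertex) : pi5 s(a, b) = fifth a b := rfl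

lemma compl_union_eq (a b : PetersenVertex) (h : Disjoint a.1 b.1) :
    (a.1 ∪ b.1)ᶜ = {fifth a b} := by revert h; revert a b; decide

lemma exists_fifth (w : PetersenVertex) (x : Fin 5) (hx : x ∉ w.1) :
    ∃ u : PetersenVertex, Disjoint w.1 u.1 ∧ fifth w u = x := by
  revert hx; revert w x; decide

lemma fifth_mem_compl {a b : PetersenVertex} (h : Disjoint a.1 b.1) :
    fifth a b ∈ (a.1 ∪ b.1)ᶜ := by
  rw [compl_union_eq a b h]; exact Finset.mem_singleton_self _

lemma fifth_not_mem_left {a b : PetersenVertex} (h : Disjoint a.1 b.1) :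
    fifth a b ∉ a.1 := by
  have := fifth_mem_compl h
  rw [Finset.mem_compl] at this
  exact fun hm => this (Finset.mem_union_left _ hm)

lemma fifth_inj {w u₁ u₂ : PetersenVertex} (h₁ : Disjoint w.1 u₁.1)
    (h₂ : Disjoint w.1 u₂.1) (h : fifth w u₁ = fifth w u₂) : u₁ = u₂ := by
  have e1 := compl_union_eq w u₁ h₁
  have e2 := compl_union_eq w u₂ h₂
  rw [h] at e1
  have : w.1 ∪ u₁.1 = w.1 ∪ u₂.1 := compl_injective (e1.trans e2.symm)
  have := congrArg (· \ w.1) this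
  simp only [Finset.union_sdiff_cancel_left h₁, Finset.union_sdiff_cancel_left h₂] at this
  exact Subtype.ext this

lemma IsCubic' : ∀ w : PetersenVertex,
    (Finset.univ.filter (fun u : PetersenVertex => Disjoint w.1 u.1)).card = 3 := by decide

lemma petersen_neighbor_ncard (w : PetersenVertex) : (Petersen.neighborSet w).ncard = 3 := by
  have : Petersen.neighborSet w =
      ↑(Finset.univ.filter (fun u : PetersenVertex => Disjoint w.1 u.1)) := by
    ext u
    simp only [mem_neighborSet, Finset.coe_filter, Finset.mem_univ, true_and,
      Set.mem_setOf_eq]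
    rfl
  rw [this, Set.ncard_coe_finset, IsCubic' w]

lemma petersen_cubic : IsCubic Petersen := petersen_neighbor_ncard

lemma incidence_ncard {V : Type*} {G : SimpleGraph V} (hG : IsCubic G) (v : V) :
    (G.incidenceSet v).ncard = 3 := by
  classical
  rw [← Nat.card_coe_set_eq, Nat.card_congr (G.incidenceSetEquivNeighborSet v),
    Nat.card_coe_set_eq]
  exact hG v

lemma incidence_finite {V : Type*} {G : SimpleGraph V} (hG : IsCubic G) (v : V) :
    (G.incidenceSet v).Finite :=
  Set.finite_of_ncard_ne_zero (by rw [incidence_ncard hG v]; omega)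

lemma proper_injOn {V α : Type*} {G : SimpleGraph V} {c : Sym2 V → α}
    (hc : IsProperEdgeColoring G c) (v : V) : Set.InjOn c (G.incidenceSet v) := by
  intro e₁ h₁ e₂ h₂ hce
  by_contra hne
  exact hc e₁ h₁.1 e₂ h₂.1 hne ⟨v, h₁.2, h₂.2⟩ hce

lemma colorSet_ncard {V : Type*} {G : SimpleGraph V} (hG : IsCubic G) {c : Sym2 V → Fin 5}
    (hc : IsProperEdgeColoring G c) (v : V) : (colorSet G c v).ncard = 3 := by
  rw [colorSet, Set.ncard_image_of_injOn (proper_injOn hc v), incidence_ncard hG v]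

lemma injOn_of_image_ncard {α β : Type*} {f : α → β} {s : Set α}
    (hs : s.Finite) (hcard : (f '' s).ncard = s.ncard) : Set.InjOn f s := by
  intro e₁ h₁ e₂ h₂ hfe
  by_contra hne
  have himg : f '' s = f '' (s \ {e₂}) := by
    apply Set.Subset.antisymm
    · rintro x ⟨e, he, rfl⟩
      by_cases h : e = e₂
      · exact ⟨e₁, ⟨h₁, by simp [hne]⟩, by rw [hfe, h]⟩
      · exact ⟨e, ⟨he, by simp [h]⟩, rfl⟩
    · exact Set.image_mono Set.diff_subset
  have h1 : (f '' (s \ {e₂})).ncard ≤ (s \ {e₂}).ncard :=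
    Set.ncard_image_le (hs.subset Set.diff_subset)
  have h2 : (s \ {e₂}).ncard < s.ncard := by
    rw [Set.ncard_diff_singleton_of_mem h₂]
    have : 0 < s.ncard := Set.ncard_pos hs |>.2 ⟨e₂, h₂⟩
    omega
  rw [himg] at hcard
  omega

lemma incidence_exists {V : Type*} {G : SimpleGraph V} {v : V} {e : Sym2 V}
    (he : e ∈ G.incidenceSet v) : ∃ u, G.Adj v u ∧ e = s(v, u) := by
  classical
  obtain ⟨he1, hv⟩ := he
  refine ⟨Sym2.Mem.other hv, ?_, (Sym2.other_spec hv).symm⟩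
  rw [← mem_edgeSet, Sym2.other_spec hv]
  exact he1

lemma pi5_image_star (w : PetersenVertex) :
    pi5 '' (Petersen.incidenceSet w) = ↑((w.1)ᶜ : Finset (Fin 5)) := by
  ext x
  constructor
  · rintro ⟨e, he, rfl⟩
    obtain ⟨u, hu, rfl⟩ := incidence_exists he
    have hd : Disjoint w.1 u.1 := hu
    simp only [pi5_mk, Finset.coe_compl, Set.mem_compl_iff, Finset.mem_coe]
    exact fifth_not_mem_left hd
  · intro hx
    have hx' : x ∉ w.1 := by simpa using hx
    obtain ⟨u, hdis, hf⟩ := exists_fifth w x hx'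
    exact ⟨s(w, u), (Petersen.mem_incidenceSet w u).2 hdis, by simp [hf]⟩

lemma pi5_injOn_star (w : PetersenVertex) : Set.InjOn pi5 (Petersen.incidenceSet w) := by
  intro e₁ h₁ e₂ h₂ he
  obtain ⟨u₁, hu₁, rfl⟩ := incidence_exists h₁
  obtain ⟨u₂, hu₂, rfl⟩ := incidence_exists h₂
  rw [fifth_inj (hu₁ : Disjoint w.1 u₁.1) (hu₂ : Disjoint w.1 u₂.1) (by simpa using he)]

lemma forward_dir {V : Type*} {G : SimpleGraph V} (hG : IsCubic G)
    (φ : Sym2 V → Sym2 PetersenVertex) (hφ : IsHColoring G Petersen φ) :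
    IsNormalEdgeColoring G (fun e => pi5 (φ e)) := by
  classical
  choose w h_img using hφ
  have hφinj : ∀ v, Set.InjOn φ (G.incidenceSet v) := fun v =>
    injOn_of_image_ncard (incidence_finite hG v)
      (by rw [h_img, incidence_ncard petersen_cubic, incidence_ncard hG])
  have hcolor : ∀ v, colorSet G (fun e => pi5 (φ e)) v = ↑(((w v).1)ᶜ : Finset (Fin 5)) := by
    intro v
    rw [colorSet, ← Set.image_image, h_img, pi5_image_star]
  constructor
  · rintro e₁ h1 e₂ h2 hne ⟨v, hv1, hv2⟩ hc
    have i1 : e₁ ∈ G.incidenceSet v := ⟨h1, hv1⟩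
    have i2 : e₂ ∈ G.incidenceSet v := ⟨h2, hv2⟩
    have m1 : φ e₁ ∈ Petersen.incidenceSet (w v) := h_img v ▸ Set.mem_image_of_mem φ i1
    have m2 : φ e₂ ∈ Petersen.incidenceSet (w v) := h_img v ▸ Set.mem_image_of_mem φ i2
    exact hne (hφinj v i1 i2 (pi5_injOn_star (w v) m1 m2 hc))
  · intro u v hadj
    have he_u : s(u, v) ∈ G.incidenceSet u := (G.mem_incidenceSet u v).2 hadj
    have he_v : s(u, v) ∈ G.incidenceSet v := by
      rw [Sym2.eq_swap]; exact (G.mem_incidenceSet v u).2 hadj.symm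
    have hm_u : φ s(u, v) ∈ Petersen.incidenceSet (w u) :=
      h_img u ▸ Set.mem_image_of_mem φ he_u
    have hm_v : φ s(u, v) ∈ Petersen.incidenceSet (w v) :=
      h_img v ▸ Set.mem_image_of_mem φ he_v
    by_cases hw : w u = w v
    · left
      unfold IsPoorEdge
      rw [hcolor u, hcolor v, hw, Set.union_self, Set.ncard_coe_finset,
        Finset.card_compl, (w v).2]
      rfl
    · right
      have hedge : φ s(u, v) = s(w u, w v) := (Sym2.mem_and_mem_iff hw).1 ⟨hm_u.2, hm_v.2⟩
      have hadj' : Petersen.Adj (w u) (w v) := Petersen.mem_edgeSet.1 (hedge ▸ hm_u.1)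
      have hd : Disjoint (w u).1 (w v).1 := hadj'
      unfold IsRichEdge
      rw [hcolor u, hcolor v, ← Finset.coe_union, Set.ncard_coe_finset,
        ← Finset.compl_inter, Finset.disjoint_iff_inter_eq_empty.1 hd]
      simp

noncomputable def Sfin {V : Type*} (G : SimpleGraph V) (c : Sym2 V → Fin 5) (v : V) :
    Finset (Fin 5) := (Set.toFinite (colorSet G c v)).toFinset

lemma mem_Sfin {V : Type*} {G : SimpleGraph V} {c : Sym2 V → Fin 5} {v : V} {a : Fin 5} :
    a ∈ Sfin G c v ↔ a ∈ colorSet G c v := Set.Finite.mem_toFinset _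

lemma Sfin_card {V : Type*} {G : SimpleGraph V} (hG : IsCubic G) {c : Sym2 V → Fin 5}
    (hc : IsProperEdgeColoring G c) (v : V) : (Sfin G c v).card = 3 := by
  rw [Sfin, ← Set.ncard_eq_toFinset_card]
  exact colorSet_ncard hG hc v

noncomputable def psiV {V : Type*} (G : SimpleGraph V) (c : Sym2 V → Fin 5) (v : V) :
    PetersenVertex := mkPV ((Sfin G c v)ᶜ)

lemma psiV_val {V : Type*} {G : SimpleGraph V} (hG : IsCubic G) {c : Sym2 V → Fin 5}
    (hc : IsProperEdgeColoring G c) (v : V) : (psiV G c v).1 = (Sfin G c v)ᶜ :=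
  mkPV_val (by rw [Finset.card_compl, Sfin_card hG hc]; rfl)

noncomputable def fB {V : Type*} (G : SimpleGraph V) (c : Sym2 V → Fin 5) (u v : V) :
    Sym2 PetersenVertex :=
  if Sfin G c u = Sfin G c v then s(psiV G c v, mkPV (Sfin G c v \ {c s(u, v)}))
  else s(psiV G c u, psiV G c v)

lemma fB_comm {V : Type*} (G : SimpleGraph V) (c : Sym2 V → Fin 5) (u v : V) :
    fB G c u v = fB G c v u := by
  by_cases h : Sfin G c u = Sfin G c v
  · rw [fB, fB, if_pos h, if_pos h.symm, show (s(v, u) : Sym2 V) = s(u, v) from Sym2.eq_swap,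
      show psiV G c u = psiV G c v from by rw [psiV, psiV, h], h]
  · rw [fB, fB, if_neg h, if_neg (Ne.symm h)]
    exact Sym2.eq_swap

noncomputable def phiB {V : Type*} (G : SimpleGraph V) (c : Sym2 V → Fin 5) :
    Sym2 V → Sym2 PetersenVertex := Sym2.lift ⟨fB G c, fB_comm G c⟩

lemma phiB_mk {V : Type*} (G : SimpleGraph V) (c : Sym2 V → Fin 5) (u v : V) :
    phiB G c s(u, v) = fB G c u v := rfl

lemma c_mem_Sfin {V : Type*} {G : SimpleGraph V} {c : Sym2 V → Fin 5} {v u : V}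
    (hadj : G.Adj v u) : c s(v, u) ∈ Sfin G c v :=
  mem_Sfin.2 ⟨s(v, u), (G.mem_incidenceSet v u).2 hadj, rfl⟩

lemma poor_Sfin_eq {V : Type*} {G : SimpleGraph V} (hG : IsCubic G) {c : Sym2 V → Fin 5}
    (hc : IsProperEdgeColoring G c) {u v : V}
    (hp : IsPoorEdge G c u v) : Sfin G c u = Sfin G c v := by
  have hfin : (colorSet G c u ∪ colorSet G c v).Finite := Set.toFinite _
  have h1 : colorSet G c u = colorSet G c u ∪ colorSet G c v :=
    Set.eq_of_subset_of_ncard_le Set.subset_union_left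
      (by rw [hp, colorSet_ncard hG hc]) hfin
  have h2 : colorSet G c v = colorSet G c u ∪ colorSet G c v :=
    Set.eq_of_subset_of_ncard_le Set.subset_union_right
      (by rw [hp, colorSet_ncard hG hc]) hfin
  have h3 : colorSet G c u = colorSet G c v := h1.trans h2.symm
  ext a
  rw [mem_Sfin, mem_Sfin, h3]

lemma rich_union_univ {V : Type*} {G : SimpleGraph V} {c : Sym2 V → Fin 5} {u v : V}
    (hr : IsRichEdge G c u v) : Sfin G c u ∪ Sfin G c v = Finset.univ := by
  apply Finset.eq_univ_of_card
  rw [show Fintype.card (Fin 5) = 5 from rfl, ← Set.ncard_coe_finset,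
    Finset.coe_union, Sfin, Sfin, Set.Finite.coe_toFinset, Set.Finite.coe_toFinset]
  exact hr

lemma rich_Sfin_ne {V : Type*} {G : SimpleGraph V} (hG : IsCubic G) {c : Sym2 V → Fin 5}
    (hc : IsProperEdgeColoring G c) {u v : V}
    (hr : IsRichEdge G c u v) : Sfin G c u ≠ Sfin G c v := by
  intro h
  have := rich_union_univ hr
  rw [h, Finset.union_self] at this
  have := congrArg Finset.card this
  rw [Sfin_card hG hc] at this
  simp at this

lemma rich_compl_eq {V : Type*} {G : SimpleGraph V} (hG : IsCubic G) {c : Sym2 V → Fin 5}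
    (hc : IsProperEdgeColoring G c) {v u : V} (hadj : G.Adj v u)
    (hr : IsRichEdge G c v u) : (Sfin G c u)ᶜ = Sfin G c v \ {c s(v, u)} := by
  apply Finset.eq_of_subset_of_card_le
  · intro x hx
    rw [Finset.mem_compl] at hx
    have hxv : x ∈ Sfin G c v := by
      have : x ∈ Sfin G c v ∪ Sfin G c u := by
        rw [rich_union_univ hr]; exact Finset.mem_univ x
      rcases Finset.mem_union.1 this with h | h
      · exact h
      · exact absurd h hx
    have hxne : x ≠ c s(v, u) := by
      intro h
      apply hx
      rw [h, Sym2.eq_swap]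
      exact c_mem_Sfin hadj.symm
    exact Finset.mem_sdiff.2 ⟨hxv, fun h => hxne (Finset.mem_singleton.1 h)⟩
  · rw [Finset.card_sdiff_of_subset (Finset.singleton_subset_iff.2 (c_mem_Sfin hadj)),
      Finset.card_compl, Sfin_card hG hc, Sfin_card hG hc]
    simp

lemma phiB_key {V : Type*} {G : SimpleGraph V} (hG : IsCubic G) {c : Sym2 V → Fin 5}
    (hc : IsNormalEdgeColoring G c) {v u : V} (hadj : G.Adj v u) :
    phiB G c s(v, u) = s(psiV G c v, mkPV (Sfin G c v \ {c s(v, u)})) := by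
  rw [phiB_mk]
  rcases hc.2 v u hadj with hp | hr
  · have hSeq : Sfin G c v = Sfin G c u := poor_Sfin_eq hG hc.1 hp
    rw [fB, if_pos hSeq, ← hSeq, show psiV G c u = psiV G c v from by rw [psiV, psiV, hSeq]]
  · have hne : Sfin G c v ≠ Sfin G c u := rich_Sfin_ne hG hc.1 hr
    rw [fB, if_neg hne, show psiV G c u = mkPV (Sfin G c v \ {c s(v, u)}) from by
      rw [psiV, rich_compl_eq hG hc.1 hadj hr]]

lemma phiB_star {V : Type*} {G : SimpleGraph V} (hG : IsCubic G) {c : Sym2 V → Fin 5}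
    (hc : IsNormalEdgeColoring G c) (v : V) :
    phiB G c '' (G.incidenceSet v) = Petersen.incidenceSet (psiV G c v) := by
  apply Set.Subset.antisymm
  · rintro x ⟨e, he, rfl⟩
    obtain ⟨u, hadj, rfl⟩ := incidence_exists he
    rw [phiB_key hG hc hadj]
    have hcm : c s(v, u) ∈ Sfin G c v := c_mem_Sfin hadj
    have ht : (mkPV (Sfin G c v \ {c s(v, u)})).1 = Sfin G c v \ {c s(v, u)} :=
      mkPV_val (by rw [Finset.card_sdiff_of_subset (Finset.singleton_subset_iff.2 hcm),
        Sfin_card hG hc.1]; rfl)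
    apply (Petersen.mem_incidenceSet _ _).2
    show Disjoint (psiV G c v).1 (mkPV (Sfin G c v \ {c s(v, u)})).1
    rw [psiV_val hG hc.1, ht]
    exact Finset.disjoint_left.2 fun x hx hx2 =>
      (Finset.mem_compl.1 hx) (Finset.mem_sdiff.1 hx2).1
  · intro x hx
    obtain ⟨u', hadj', rfl⟩ := incidence_exists hx
    have hdisj : Disjoint (psiV G c v).1 u'.1 := hadj'
    have hsub : u'.1 ⊆ Sfin G c v := by
      intro y hy
      by_contra hyS
      exact (Finset.disjoint_left.1 hdisj
        (by rw [psiV_val hG hc.1]; exact Finset.mem_compl.2 hyS)) hy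
    have hcard : (Sfin G c v \ u'.1).card = 1 := by
      rw [Finset.card_sdiff_of_subset hsub, Sfin_card hG hc.1, u'.2]
    obtain ⟨a, ha⟩ := Finset.card_pos.1 (by rw [hcard]; omega)
    have haS : a ∈ Sfin G c v := (Finset.mem_sdiff.1 ha).1
    have haU : a ∉ u'.1 := (Finset.mem_sdiff.1 ha).2
    have hu'eq : u'.1 = Sfin G c v \ {a} := by
      apply Finset.eq_of_subset_of_card_le
      · intro y hy
        exact Finset.mem_sdiff.2 ⟨hsub hy,
          fun h => haU (Finset.mem_singleton.1 h ▸ hy)⟩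
      · rw [Finset.card_sdiff_of_subset (Finset.singleton_subset_iff.2 haS), Sfin_card hG hc.1, u'.2]
        simp
    obtain ⟨e, he, hce⟩ := mem_Sfin.1 haS
    obtain ⟨u, hadj, rfl⟩ := incidence_exists he
    refine ⟨s(v, u), he, ?_⟩
    rw [phiB_key hG hc hadj, hce]
    have : mkPV (Sfin G c v \ {a}) = u' := Subtype.ext ((mkPV_val (by
      rw [Finset.card_sdiff_of_subset (Finset.singleton_subset_iff.2 haS), Sfin_card hG hc.1]
      rfl)).trans
      hu'eq.symm)
    rw [this]

/-- A cubic graph `G` admits a `P10`-coloring (i.e. `P10 ≺ G`) if and only if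
`G` admits a normal edge-coloring with at most 5 colors. -/
theorem petersen_coloring_iff_normal_five {V : Type*} (G : SimpleGraph V)
    (hG : IsCubic G) :
    (∃ φ : Sym2 V → Sym2 PetersenVertex, IsHColoring G Petersen φ) ↔
      (∃ c : Sym2 V → Fin 5, IsNormalEdgeColoring G c) := by
  constructor
  · rintro ⟨φ, hφ⟩
    exact ⟨fun e => pi5 (φ e), forward_dir hG φ hφ⟩
  · rintro ⟨c, hc⟩
    exact ⟨phiB G c, fun v => ⟨psiV G c v, phiB_star hG hc v⟩⟩
end

section
/- Let G be a bridgeless cubic graph. If G admits a normal proper 5-edge-coloring, then G admits a Berge–Fulkerson covering, i.e., there exist six (not necessarily distinct) perfect matchings of G such that every edge of G belongs to exactly two of them. -/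
open SimpleGraph

namespace BFAux

/-- The six perfect matchings of the Petersen graph `K(5,2)`, each edge recorded as an
unordered pair (2-element `Finset`) of 2-element subsets of `Fin 5`. -/
def NBF : Fin 6 → Finset (Finset (Finset (Fin 5)))
  | 0 => {{{0,3},{2,4}}, {{0,4},{1,3}}, {{0,1},{2,3}}, {{0,2},{1,4}}, {{1,2},{3,4}}}
  | 1 => {{{0,2},{3,4}}, {{0,3},{1,4}}, {{0,1},{2,3}}, {{0,4},{1,2}}, {{1,3},{2,4}}}
  | 2 => {{{0,3},{1,4}}, {{0,2},{1,3}}, {{0,4},{2,3}}, {{1,2},{3,4}}, {{0,1},{2,4}}}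
  | 3 => {{{0,2},{3,4}}, {{0,4},{1,3}}, {{0,3},{1,2}}, {{1,4},{2,3}}, {{0,1},{2,4}}}
  | 4 => {{{0,3},{2,4}}, {{0,4},{1,2}}, {{0,2},{1,3}}, {{0,1},{3,4}}, {{1,4},{2,3}}}
  | 5 => {{{0,3},{1,2}}, {{0,1},{3,4}}, {{0,4},{2,3}}, {{0,2},{1,4}}, {{1,3},{2,4}}}

/-- Each of the six matchings covers each Petersen vertex exactly once; formulated at the
vertex `Aᶜ` where `A` is a 3-element set (the color set of a vertex of `G`). -/
lemma NBF_cover : ∀ i : Fin 6, ∀ A : Finset (Fin 5), A.card = 3 →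
    ∃ x, (x ∈ A ∧ ({Aᶜ, A.erase x} : Finset (Finset (Fin 5))) ∈ NBF i) ∧
      ∀ y, (y ∈ A ∧ ({Aᶜ, A.erase y} : Finset (Finset (Fin 5))) ∈ NBF i) → y = x := by
  decide

/-- Each Petersen edge lies in exactly two of the six matchings. -/
lemma NBF_two : ∀ A : Finset (Fin 5), A.card = 3 → ∀ x ∈ A,
    (Finset.univ.filter
      (fun i : Fin 6 => ({Aᶜ, A.erase x} : Finset (Finset (Fin 5))) ∈ NBF i)).card = 2 := by
  decide

variable {V : Type*} (G : SimpleGraph V) (c : Sym2 V → Fin 5)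

/-- The color set at a vertex, as a `Finset`. -/
noncomputable def csF (v : V) : Finset (Fin 5) := (Set.toFinite (colorSet G c v)).toFinset

lemma mem_csF {v : V} {x : Fin 5} : x ∈ csF G c v ↔ x ∈ colorSet G c v :=
  Set.Finite.mem_toFinset _

/-- The Petersen edge associated to an edge of `G` incident to `u` with color `x`. -/
noncomputable def pr (u : V) (x : Fin 5) : Finset (Finset (Fin 5)) :=
  {(csF G c u)ᶜ, (csF G c u).erase x}

lemma incidence_decomp {v : V} {e : Sym2 V} (he : e ∈ G.incidenceSet v) :
    ∃ u, G.Adj v u ∧ e = s(v, u) := by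
  induction e with
  | _ a b =>
    rw [SimpleGraph.mk'_mem_incidenceSet_iff] at he
    obtain ⟨hab, hv⟩ := he
    rcases hv with rfl | rfl
    · exact ⟨b, hab, rfl⟩
    · exact ⟨a, hab.symm, Sym2.eq_swap⟩

lemma colorSet_ncard (hG : IsCubic G) (hp : IsProperEdgeColoring G c) (v : V) :
    (colorSet G c v).ncard = 3 := by
  have hnfin : (G.neighborSet v).Finite := by
    by_contra h
    have h' : (G.neighborSet v).Infinite := h
    have := h'.ncard
    rw [hG v] at this
    omega
  have him : G.incidenceSet v = (fun u => s(v, u)) '' G.neighborSet v := by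
    ext e
    constructor
    · intro he
      obtain ⟨u, hu, rfl⟩ := incidence_decomp G he
      exact ⟨u, hu, rfl⟩
    · rintro ⟨u, hu, rfl⟩
      exact (SimpleGraph.mk'_mem_incidenceSet_left_iff G).2 hu
  have hinj : Set.InjOn (fun u => s(v, u)) (G.neighborSet v) := by
    intro a _ b _ hab
    exact Sym2.congr_right.1 hab
  have hicard : (G.incidenceSet v).ncard = 3 := by
    rw [him, Set.ncard_image_of_injOn hinj, hG v]
  have hifin : (G.incidenceSet v).Finite := by
    rw [him]; exact hnfin.image _
  have hcinj : Set.InjOn c (G.incidenceSet v) := by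
    intro e₁ h₁ e₂ h₂ hcc
    by_contra hne
    exact hp e₁ h₁.1 e₂ h₂.1 hne ⟨v, h₁.2, h₂.2⟩ hcc
  rw [colorSet, Set.ncard_image_of_injOn hcinj, hicard]

lemma csF_card (hG : IsCubic G) (hp : IsProperEdgeColoring G c) (v : V) :
    (csF G c v).card = 3 := by
  have := colorSet_ncard G c hG hp v
  rwa [Set.ncard_eq_toFinset_card _ (Set.toFinite _)] at this

lemma color_mem_left {u v : V} (h : G.Adj u v) : c s(u, v) ∈ colorSet G c u :=
  ⟨s(u, v), (SimpleGraph.mk'_mem_incidenceSet_left_iff G).2 h, rfl⟩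

/-- Well-definedness: the Petersen edge assigned to an edge does not depend on the
chosen endpoint. This is where normality is used. -/
lemma pr_welldef (hG : IsCubic G) (hp : IsProperEdgeColoring G c)
    (hn : ∀ u v : V, G.Adj u v → IsPoorEdge G c u v ∨ IsRichEdge G c u v)
    {u v : V} (h : G.Adj u v) :
    pr G c u (c s(u, v)) = pr G c v (c s(u, v)) := by
  set x := c s(u, v) with hxdef
  have hxu : x ∈ colorSet G c u := color_mem_left G c h
  have hxv : x ∈ colorSet G c v := by
    have := color_mem_left G c h.symm
    rwa [Sym2.eq_swap] at this
  have hAu : (colorSet G c u).ncard = 3 := colorSet_ncard G c hG hp u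
  have hAv : (colorSet G c v).ncard = 3 := colorSet_ncard G c hG hp v
  have hfu : (colorSet G c u).Finite := Set.toFinite _
  have hfv : (colorSet G c v).Finite := Set.toFinite _
  rcases hn u v h with hpoor | hrich
  · -- poor: the two color sets coincide
    have hpoor' : (colorSet G c u ∪ colorSet G c v).ncard = 3 := hpoor
    have h1 : colorSet G c u = colorSet G c u ∪ colorSet G c v :=
      Set.eq_of_subset_of_ncard_le Set.subset_union_left
        (by rw [hpoor', hAu]) (hfu.union hfv)
    have h2 : colorSet G c v = colorSet G c u ∪ colorSet G c v :=
      Set.eq_of_subset_of_ncard_le Set.subset_union_right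
        (by rw [hpoor', hAv]) (hfu.union hfv)
    have h3 : colorSet G c u = colorSet G c v := h1.trans h2.symm
    have hceq : csF G c u = csF G c v := by
      ext y
      rw [mem_csF, mem_csF, h3]
    rw [pr, pr, hceq]
  · -- rich: all five colors appear
    have hrich' : (colorSet G c u ∪ colorSet G c v).ncard = 5 := hrich
    have huniv : colorSet G c u ∪ colorSet G c v = Set.univ := by
      refine Set.eq_of_subset_of_ncard_le (Set.subset_univ _) ?_ Set.finite_univ
      rw [hrich', Set.ncard_univ]
      simp
    have hie := Set.ncard_union_add_ncard_inter (colorSet G c u) (colorSet G c v) hfu hfv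
    have hinter1 : (colorSet G c u ∩ colorSet G c v).ncard = 1 := by
      rw [hrich', hAu, hAv] at hie; omega
    have hinter : colorSet G c u ∩ colorSet G c v = {x} := by
      obtain ⟨a, ha⟩ := Set.ncard_eq_one.1 hinter1
      have : x ∈ ({a} : Set (Fin 5)) := ha ▸ ⟨hxu, hxv⟩
      rw [Set.mem_singleton_iff] at this
      rw [ha, this]
    have key : ∀ y : Fin 5, y ∉ colorSet G c u ↔ (y ≠ x ∧ y ∈ colorSet G c v) := by
      intro y
      constructor
      · intro hy
        have hyv : y ∈ colorSet G c v := by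
          have : y ∈ colorSet G c u ∪ colorSet G c v := huniv ▸ Set.mem_univ y
          rcases this with h' | h'
          · exact absurd h' hy
          · exact h'
        exact ⟨fun hyx => hy (hyx ▸ hxu), hyv⟩
      · rintro ⟨hyx, hyv⟩ hyu
        have : y ∈ ({x} : Set (Fin 5)) := hinter ▸ ⟨hyu, hyv⟩
        exact hyx this
    have key' : ∀ y : Fin 5, y ∉ colorSet G c v ↔ (y ≠ x ∧ y ∈ colorSet G c u) := by
      intro y
      constructor
      · intro hy
        have hyu : y ∈ colorSet G c u := by
          have : y ∈ colorSet G c u ∪ colorSet G c v := huniv ▸ Set.mem_univ y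
          rcases this with h' | h'
          · exact h'
          · exact absurd h' hy
        exact ⟨fun hyx => hy (hyx ▸ hxv), hyu⟩
      · rintro ⟨hyx, hyu⟩ hyv
        have : y ∈ ({x} : Set (Fin 5)) := hinter ▸ ⟨hyu, hyv⟩
        exact hyx this
    have e1 : (csF G c u)ᶜ = (csF G c v).erase x := by
      ext y
      rw [Finset.mem_compl, Finset.mem_erase, mem_csF, mem_csF]
      exact key y
    have e2 : (csF G c v)ᶜ = (csF G c u).erase x := by
      ext y
      rw [Finset.mem_compl, Finset.mem_erase, mem_csF, mem_csF]
      exact key' y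
    rw [pr, pr, e1, ← e2, Finset.pair_comm]

end BFAux

/-- A bridgeless cubic graph admitting a normal proper 5-edge-coloring
admits a Berge–Fulkerson covering. -/
theorem normal_five_implies_berge_fulkerson {V : Type*} (G : SimpleGraph V)
    (hG : IsCubic G) (hbridgeless : ∀ e ∈ G.edgeSet, ¬ G.IsBridge e)
    (hc : ∃ c : Sym2 V → Fin 5, IsNormalEdgeColoring G c) :
    ∃ M : Fin 6 → Set (Sym2 V), IsBergeFulkersonCovering G M := by
  classical
  obtain ⟨c, hp, hn⟩ := hc
  set M : Fin 6 → Set (Sym2 V) := fun i =>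
    {e | ∃ u v, G.Adj u v ∧ e = s(u, v) ∧ BFAux.pr G c u (c e) ∈ BFAux.NBF i} with hM
  refine ⟨M, ?_, ?_⟩
  · intro i
    constructor
    · rintro e ⟨u, v, huv, rfl, -⟩
      exact (G.mem_edgeSet).2 huv
    · intro v₀
      have hA : (BFAux.csF G c v₀).card = 3 := BFAux.csF_card G c hG hp v₀
      obtain ⟨x, ⟨hxA, hxN⟩, huniq⟩ := BFAux.NBF_cover i (BFAux.csF G c v₀) hA
      obtain ⟨e₀, he₀, hce₀⟩ : ∃ e₀ ∈ G.incidenceSet v₀, c e₀ = x :=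
        (BFAux.mem_csF G c).1 hxA
      obtain ⟨u, hadj, he₀eq⟩ := BFAux.incidence_decomp G he₀
      refine ⟨e₀, ⟨⟨v₀, u, hadj, he₀eq, ?_⟩, ?_⟩, ?_⟩
      · rw [hce₀]
        exact hxN
      · rw [he₀eq]
        exact Sym2.mem_mk_left _ _
      · rintro e' ⟨⟨a, b, hab, he'eq, hNe'⟩, hv₀e'⟩
        have hab' : v₀ = a ∨ v₀ = b := by
          rw [he'eq] at hv₀e'
          exact Sym2.mem_iff.1 hv₀e'
        have hpr : BFAux.pr G c v₀ (c e') ∈ BFAux.NBF i := by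
          rcases hab' with rfl | rfl
          · exact hNe'
          · have := BFAux.pr_welldef G c hG hp hn hab
            rw [← he'eq] at this
            rw [← this]
            exact hNe'
        have hce' : c e' ∈ BFAux.csF G c v₀ := by
          rw [BFAux.mem_csF]
          refine ⟨e', ⟨?_, hv₀e'⟩, rfl⟩
          rw [he'eq]
          exact (G.mem_edgeSet).2 hab
        have hxe' : c e' = x := huniq (c e') ⟨hce', hpr⟩
        by_contra hne
        have hmem' : e' ∈ G.incidenceSet v₀ := by
          refine ⟨?_, hv₀e'⟩
          rw [he'eq]
          exact (G.mem_edgeSet).2 hab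
        exact hp e' hmem'.1 e₀ he₀.1 hne ⟨v₀, hmem'.2, he₀.2⟩ (hxe'.trans hce₀.symm)
  · intro e he
    revert he
    induction e with
    | _ u v =>
      intro he
      have hadj : G.Adj u v := (G.mem_edgeSet).1 he
      have hset : {i : Fin 6 | s(u, v) ∈ M i} =
          ↑(Finset.univ.filter
            (fun i : Fin 6 => BFAux.pr G c u (c s(u, v)) ∈ BFAux.NBF i)) := by
        ext i
        simp only [Set.mem_setOf_eq, Finset.coe_filter, Finset.mem_univ, true_and]
        constructor
        · rintro ⟨a, b, hab, heq, hN⟩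
          rcases Sym2.eq_iff.1 heq with ⟨rfl, rfl⟩ | ⟨rfl, rfl⟩
          · exact hN
          · have hw := BFAux.pr_welldef G c hG hp hn hab
            rw [Sym2.eq_swap] at hw
            rw [← hw]
            exact hN
        · intro hN
          exact ⟨u, v, hadj, rfl, hN⟩
      rw [hset, Set.ncard_coe_finset]
      have hxmem : c s(u, v) ∈ BFAux.csF G c u := by
        rw [BFAux.mem_csF]
        exact BFAux.color_mem_left G c hadj
      have := BFAux.NBF_two (BFAux.csF G c u) (BFAux.csF_card G c hG hp u)
        (c s(u, v)) hxmem
      exact this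
end

section
/- The Petersen graph has exactly six perfect matchings, and every edge of the Petersen graph belongs to exactly two of these six perfect matchings. -/
open SimpleGraph

instance inst_s7 : DecidableEq PetersenVertex := by unfold PetersenVertex; infer_instance
instance inst_s7_2 : Fintype PetersenVertex := by unfold PetersenVertex; infer_instance
instance : DecidableRel Petersen.Adj := fun s t => by
  unfold Petersen; exact inferInstanceAs (Decidable (Disjoint s.1 t.1))

/-- The finset of perfect matchings of the Petersen graph. -/
def PMfinset : Finset (Finset (Sym2 PetersenVertex)) :=
  (Petersen.edgeFinset.powersetCard 5).filter
    (fun F => ∀ v : PetersenVertex, (F.filter (fun e => v ∈ e)).card = 1)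

set_option maxRecDepth 1000000 in
set_option maxHeartbeats 4000000 in
theorem PMfinset_card : PMfinset.card = 6 := by decide

set_option maxRecDepth 1000000 in
set_option maxHeartbeats 4000000 in
theorem PMfinset_edge : ∀ e ∈ Petersen.edgeFinset,
    ((PMfinset.filter (fun F => e ∈ F)).card = 2) := by decide

theorem petersen_card_vertices : Fintype.card PetersenVertex = 10 := by decide

set_option maxRecDepth 10000 in
/-- Double counting: a set of edges covering every vertex exactly once has 5 edges. -/
theorem matching_card_five (F : Finset (Sym2 PetersenVertex))
    (hsub : ∀ e ∈ F, e ∈ Petersen.edgeSet)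
    (h1 : ∀ v : PetersenVertex, (F.filter (fun e => v ∈ e)).card = 1) :
    F.card = 5 := by
  have h2 : ∀ e ∈ F, (Finset.univ.filter (fun v => v ∈ e)).card = 2 := by
    intro e he
    induction e with
    | _ a b =>
      have hne : ¬ (s(a, b)).IsDiag := Petersen.not_isDiag_of_mem_edgeSet (hsub _ he)
      have hab : a ≠ b := by simpa [Sym2.isDiag_iff_proj_eq] using hne
      have : (Finset.univ.filter (fun v => v ∈ s(a, b))) = {a, b} := by
        ext v; simp [Sym2.mem_iff]
      rw [this, Finset.card_pair hab]
  have key : 2 * F.card = 10 := by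
    calc 2 * F.card = ∑ _e ∈ F, 2 := by rw [Finset.sum_const, smul_eq_mul, mul_comm]
    _ = ∑ e ∈ F, (Finset.univ.filter (fun v => v ∈ e)).card := by
        exact (Finset.sum_congr rfl (fun e he => (h2 e he).symm))
    _ = ∑ e ∈ F, ∑ v : PetersenVertex, (if v ∈ e then 1 else 0) :=
        Finset.sum_congr rfl (fun e _ => Finset.card_filter _ _)
    _ = ∑ v : PetersenVertex, ∑ e ∈ F, (if v ∈ e then 1 else 0) := Finset.sum_comm
    _ = ∑ v : PetersenVertex, (F.filter (fun e => v ∈ e)).card :=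
        Finset.sum_congr rfl (fun v _ => (Finset.card_filter _ _).symm)
    _ = ∑ _v : PetersenVertex, 1 := Finset.sum_congr rfl (fun v _ => h1 v)
    _ = 10 := by rw [Finset.sum_const, smul_eq_mul, mul_one, Finset.card_univ,
        petersen_card_vertices]
  omega

theorem pm_iff (M : Set (Sym2 PetersenVertex)) :
    IsPerfectMatchingSet Petersen M ↔ ∃ F ∈ PMfinset, M = ↑F := by
  constructor
  · rintro ⟨hsub, hv⟩
    have hfin : M.Finite := Set.toFinite M
    refine ⟨hfin.toFinset, ?_, hfin.coe_toFinset.symm⟩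
    have hmem : ∀ e, e ∈ hfin.toFinset ↔ e ∈ M := fun e => hfin.mem_toFinset
    have hsub' : ∀ e ∈ hfin.toFinset, e ∈ Petersen.edgeSet := fun e he =>
      hsub ((hmem e).1 he)
    have h1 : ∀ v : PetersenVertex, ((hfin.toFinset).filter (fun e => v ∈ e)).card = 1 := by
      intro v
      obtain ⟨e₀, ⟨he₀M, hve₀⟩, huniq⟩ := hv v
      have : (hfin.toFinset).filter (fun e => v ∈ e) = {e₀} := by
        ext e
        simp only [Finset.mem_filter, Finset.mem_singleton, hmem]
        constructor
        · rintro ⟨h1, h2⟩; exact huniq e ⟨h1, h2⟩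
        · rintro rfl; exact ⟨he₀M, hve₀⟩
      rw [this, Finset.card_singleton]
    refine Finset.mem_filter.2 ⟨Finset.mem_powersetCard.2 ⟨?_, ?_⟩, h1⟩
    · intro e he
      exact SimpleGraph.mem_edgeFinset.2 (hsub' e he)
    · exact matching_card_five _ hsub' h1
  · rintro ⟨F, hF, rfl⟩
    obtain ⟨hF1, h1⟩ := Finset.mem_filter.1 hF
    obtain ⟨hsub, _⟩ := Finset.mem_powersetCard.1 hF1
    refine ⟨fun e he => SimpleGraph.mem_edgeFinset.1 (hsub he), fun v => ?_⟩
    obtain ⟨e₀, he₀⟩ := Finset.card_eq_one.1 (h1 v)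
    have hmem0 : e₀ ∈ F.filter (fun e => v ∈ e) := he₀ ▸ Finset.mem_singleton_self e₀
    obtain ⟨he₀F, hve₀⟩ := Finset.mem_filter.1 hmem0
    refine ⟨e₀, ⟨he₀F, hve₀⟩, ?_⟩
    rintro e ⟨heF, hve⟩
    have : e ∈ F.filter (fun e => v ∈ e) := Finset.mem_filter.2 ⟨heF, hve⟩
    rw [he₀] at this
    exact Finset.mem_singleton.1 this

/-- The Petersen graph has exactly six perfect matchings, and every edge of the
Petersen graph belongs to exactly two of them. -/
theorem petersen_six_perfect_matchings :
    {M : Set (Sym2 PetersenVertex) | IsPerfectMatchingSet Petersen M}.ncard = 6 ∧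
      ∀ e ∈ Petersen.edgeSet,
        {M : Set (Sym2 PetersenVertex) |
          IsPerfectMatchingSet Petersen M ∧ e ∈ M}.ncard = 2 := by
  constructor
  · have hset : {M : Set (Sym2 PetersenVertex) | IsPerfectMatchingSet Petersen M}
        = ((↑) : Finset (Sym2 PetersenVertex) → Set (Sym2 PetersenVertex)) '' (↑PMfinset : Set (Finset (Sym2 PetersenVertex))) := by
      ext M
      simp only [Set.mem_setOf_eq, pm_iff, Set.mem_image, Finset.mem_coe]
      constructor
      · rintro ⟨F, hF, rfl⟩; exact ⟨F, hF, rfl⟩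
      · rintro ⟨F, hF, rfl⟩; exact ⟨F, hF, rfl⟩
    rw [hset, Set.ncard_image_of_injective _ Finset.coe_injective,
      Set.ncard_coe_finset, PMfinset_card]
  · intro e he
    have hset : {M : Set (Sym2 PetersenVertex) |
          IsPerfectMatchingSet Petersen M ∧ e ∈ M}
        = ((↑) : Finset (Sym2 PetersenVertex) → Set (Sym2 PetersenVertex)) '' (↑(PMfinset.filter (fun F => e ∈ F)) :
            Set (Finset (Sym2 PetersenVertex))) := by
      ext M
      simp only [Set.mem_setOf_eq, pm_iff, Set.mem_image, Finset.mem_coe,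
        Finset.mem_filter]
      constructor
      · rintro ⟨⟨F, hF, rfl⟩, heM⟩
        exact ⟨F, ⟨hF, heM⟩, rfl⟩
      · rintro ⟨F, ⟨hF, heF⟩, rfl⟩
        exact ⟨⟨F, hF, rfl⟩, heF⟩
    rw [hset, Set.ncard_image_of_injective _ Finset.coe_injective,
      Set.ncard_coe_finset, PMfinset_edge e (SimpleGraph.mem_edgeFinset.2 he)]
end

section
/- The Petersen graph admits a normal proper 5-edge-coloring, i.e., a proper edge-coloring with at most 5 colors with respect to which every edge is either poor or rich. -/
open SimpleGraph

/-- The color of an edge `st`: the unique element of `Fin 5` outside `s ∪ t`. -/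
def miss (s t : PetersenVertex) : Fin 5 :=
  if h : ((s.1 ∪ t.1)ᶜ).Nonempty then ((s.1 ∪ t.1)ᶜ).min' h else 0

lemma miss_comm (s t : PetersenVertex) : miss s t = miss t s := by
  unfold miss; rw [Finset.union_comm]

def pcol : Sym2 PetersenVertex → Fin 5 :=
  Sym2.lift ⟨miss, miss_comm⟩

@[simp] lemma pcol_mk (s t : PetersenVertex) : pcol s(s, t) = miss s t := rfl

lemma compl_eq {s t : PetersenVertex} (h : Disjoint s.1 t.1) :
    (s.1 ∪ t.1)ᶜ = {miss s t} := by
  have hcard : (s.1 ∪ t.1).card = 4 := by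
    rw [Finset.card_union_of_disjoint h, s.2, t.2]
  have hc : ((s.1 ∪ t.1)ᶜ).card = 1 := by
    rw [Finset.card_compl, hcard]; rfl
  obtain ⟨a, ha⟩ := Finset.card_eq_one.mp hc
  have hne : ((s.1 ∪ t.1)ᶜ).Nonempty := ⟨a, ha ▸ Finset.mem_singleton_self a⟩
  have hmem : miss s t ∈ (s.1 ∪ t.1)ᶜ := by
    unfold miss; rw [dif_pos hne]; exact Finset.min'_mem _ hne
  rw [ha] at hmem ⊢
  rw [Finset.mem_singleton] at hmem
  rw [hmem]

lemma miss_not_mem_left {s t : PetersenVertex} (h : Disjoint s.1 t.1) :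
    miss s t ∉ s.1 := by
  have := (compl_eq h) ▸ Finset.mem_singleton_self (miss s t)
  rw [Finset.mem_compl, Finset.mem_union] at this
  exact fun hx => this (Or.inl hx)

lemma miss_not_mem_right {s t : PetersenVertex} (h : Disjoint s.1 t.1) :
    miss s t ∉ t.1 := by
  have := (compl_eq h) ▸ Finset.mem_singleton_self (miss s t)
  rw [Finset.mem_compl, Finset.mem_union] at this
  exact fun hx => this (Or.inr hx)

lemma neighbor_eq {v w : PetersenVertex} (h : Disjoint v.1 w.1) :
    w.1 = (v.1 ∪ {miss v w})ᶜ := by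
  have hm : miss v w ∉ v.1 := miss_not_mem_left h
  have hsub : w.1 ⊆ (v.1 ∪ {miss v w})ᶜ := by
    intro x hx
    rw [Finset.mem_compl, Finset.mem_union, Finset.mem_singleton]
    rintro (hxv | hxm)
    · exact (Finset.disjoint_left.mp h hxv) hx
    · exact miss_not_mem_right h (hxm ▸ hx)
  have hcard : ((v.1 ∪ {miss v w})ᶜ).card = 2 := by
    rw [Finset.card_compl, Finset.card_union_of_disjoint
      (Finset.disjoint_singleton_right.mpr hm), v.2, Finset.card_singleton]
    rfl
  exact Finset.eq_of_subset_of_card_le hsub (by rw [hcard, w.2])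

lemma miss_inj {v w₁ w₂ : PetersenVertex} (h₁ : Disjoint v.1 w₁.1)
    (h₂ : Disjoint v.1 w₂.1) (h : miss v w₁ = miss v w₂) : w₁ = w₂ := by
  apply Subtype.ext
  rw [neighbor_eq h₁, neighbor_eq h₂, h]

lemma colorSet_eq (v : PetersenVertex) :
    colorSet Petersen pcol v = ↑(v.1ᶜ) := by
  ext a
  simp only [colorSet, Set.mem_image, Finset.coe_compl, Set.mem_compl_iff,
    Finset.mem_coe]
  constructor
  · rintro ⟨e, he, rfl⟩
    obtain ⟨hedge, hve⟩ := he
    induction e using Sym2.ind with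
    | _ x y =>
      have hadj : Petersen.Adj x y := hedge
      rcases Sym2.mem_iff.mp hve with rfl | rfl
      · exact miss_not_mem_left hadj
      · rw [pcol_mk, miss_comm]; exact miss_not_mem_left hadj.symm
  · intro ha
    have hwcard : ((v.1 ∪ {a})ᶜ).card = 2 := by
      rw [Finset.card_compl, Finset.card_union_of_disjoint
        (Finset.disjoint_singleton_right.mpr ha), v.2, Finset.card_singleton]
      rfl
    set w : PetersenVertex := ⟨(v.1 ∪ {a})ᶜ, hwcard⟩ with hw
    have hadj : Petersen.Adj v w := by
      show Disjoint v.1 w.1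
      rw [Finset.disjoint_left]
      intro x hx hxc
      rw [hw] at hxc
      exact (Finset.mem_compl.mp hxc) (Finset.mem_union_left _ hx)
    have hunion : v.1 ∪ w.1 = {a}ᶜ := by
      ext x
      simp only [Finset.mem_union, Finset.mem_compl, Finset.mem_singleton, hw]
      constructor
      · rintro (hx | hx)
        · exact fun hxa => ha (hxa ▸ hx)
        · exact fun hxa => hx (Or.inr hxa)
      · intro hxa
        by_cases hxv : x ∈ v.1
        · exact Or.inl hxv
        · exact Or.inr (fun h => h.elim hxv hxa)
    have hmiss : miss v w = a := by
      have := compl_eq hadj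
      rw [hunion, compl_compl] at this
      exact (Finset.singleton_injective this.symm)
    refine ⟨s(v, w), ⟨hadj, Sym2.mem_mk_left v w⟩, ?_⟩
    rw [pcol_mk, hmiss]

lemma proper_pcol : IsProperEdgeColoring Petersen pcol := by
  intro e₁ he₁ e₂ he₂ hne ⟨v, hv₁, hv₂⟩ heq
  apply hne
  induction e₁ using Sym2.ind with
  | _ a b =>
  induction e₂ using Sym2.ind with
  | _ x y =>
  have hab : Petersen.Adj a b := he₁
  have hxy : Petersen.Adj x y := he₂
  -- normalize so v is the first coordinate
  rcases Sym2.mem_iff.mp hv₁ with rfl | rfl <;>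
    rcases Sym2.mem_iff.mp hv₂ with rfl | rfl
  · rw [pcol_mk, pcol_mk] at heq
    rw [miss_inj hab hxy heq]
  · rw [pcol_mk, pcol_mk, miss_comm x v] at heq
    rw [Sym2.eq_swap (a := x) (b := v), miss_inj hab hxy.symm heq]
  · rw [pcol_mk, pcol_mk, miss_comm a v] at heq
    rw [Sym2.eq_swap (a := a) (b := v), miss_inj hab.symm hxy heq]
  · rw [pcol_mk, pcol_mk, miss_comm a v, miss_comm x v] at heq
    rw [Sym2.eq_swap (a := a) (b := v), Sym2.eq_swap (a := x) (b := v),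
      miss_inj hab.symm hxy.symm heq]

/-- The Petersen graph admits a normal proper 5-edge-coloring. -/
theorem petersen_normal_five :
    ∃ c : Sym2 PetersenVertex → Fin 5, IsNormalEdgeColoring Petersen c := by
  refine ⟨pcol, proper_pcol, fun u v huv => Or.inr ?_⟩
  unfold IsRichEdge
  have hdisj : Disjoint u.1 v.1 := huv
  have huniv : colorSet Petersen pcol u ∪ colorSet Petersen pcol v =
      (Set.univ : Set (Fin 5)) := by
    rw [colorSet_eq, colorSet_eq]
    ext x
    simp only [Set.mem_union, Finset.coe_compl, Set.mem_compl_iff,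
      Finset.mem_coe, Set.mem_univ, iff_true]
    by_cases hx : x ∈ u.1
    · exact Or.inr (Finset.disjoint_left.mp hdisj hx)
    · exact Or.inl hx
  rw [huniv, Set.ncard_univ, Nat.card_eq_fintype_card, Fintype.card_fin]
end
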